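/- arXiv:2109.13093 — 3 statements merged into one kernel-verified Lean document; each statement's English description precedes it below -/
import Mathlib

section
/- Let M be a smooth manifold, x ∈ M, and let 𝓜 be a left C^∞(M)-module. Define N_x(𝓜) = N_x(C^∞(M))·𝓜, where N_x(C^∞(M)) is the ideal of functions with zero germ at x. Then N_x(𝓜) = { m ∈ 𝓜 : f·m = m for some f ∈ C^∞(M) with zero germ at x } = { m ∈ 𝓜 : f·m = 0 for some f ∈ C^∞(M) with germ 1 at x }. -/
/-!
STATEMENT 1: For a smooth manifold `M`, `x ∈ M`, and a left `C^∞(M)`-module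
`𝓜`, the submodule `N_x(𝓜) = N_x(C^∞(M))·𝓜` equals both
`{m | f • m = m for some f with zero germ at x}` and
`{m | f • m = 0 for some f with germ 1 at x}`.
-/

open scoped Manifold
open Filter Topology

theorem localization_submodule_characterizations
    {E : Type} [NormedAddCommGroup E] [NormedSpace ℝ E]
    {H : Type} [TopologicalSpace H] (I : ModelWithCorners ℝ E H)
    (M : Type) [TopologicalSpace M] [ChartedSpace H M]
    [IsManifold I (⊤ : ℕ∞) M] [T2Space M] [ParacompactSpace M]
    [FiniteDimensional ℝ E] (x : M)
    (𝓜 : Type) [AddCommGroup 𝓜]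
    [Module (ContMDiffMap I (modelWithCornersSelf ℝ ℝ) M ℝ (⊤ : ℕ∞)) 𝓜] :
    ({m : 𝓜 | ∃ (f : ContMDiffMap I (modelWithCornersSelf ℝ ℝ) M ℝ (⊤ : ℕ∞)) (m' : 𝓜),
        (∀ᶠ y in 𝓝 x, f y = 0) ∧ m = f • m'} =
      {m : 𝓜 | ∃ f : ContMDiffMap I (modelWithCornersSelf ℝ ℝ) M ℝ (⊤ : ℕ∞),
        (∀ᶠ y in 𝓝 x, f y = 0) ∧ f • m = m}) ∧
    ({m : 𝓜 | ∃ f : ContMDiffMap I (modelWithCornersSelf ℝ ℝ) M ℝ (⊤ : ℕ∞),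
        (∀ᶠ y in 𝓝 x, f y = 0) ∧ f • m = m} =
      {m : 𝓜 | ∃ f : ContMDiffMap I (modelWithCornersSelf ℝ ℝ) M ℝ (⊤ : ℕ∞),
        (∀ᶠ y in 𝓝 x, f y = 1) ∧ f • m = 0}) := by
  constructor
  · ext m
    simp only [Set.mem_setOf_eq]
    constructor
    · rintro ⟨f, m', hf, rfl⟩
      -- choose a smooth bump function supported where `f` vanishes
      obtain ⟨φ, hφ, -⟩ :=
        ((SmoothBumpFunction.nhds_basis_support (I := I) (c := x) hf).mem_iff).mp
          (Filter.univ_mem)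
      set φc : ContMDiffMap I (modelWithCornersSelf ℝ ℝ) M ℝ (⊤ : ℕ∞) := ⟨φ, φ.contMDiff⟩ with hφc
      refine ⟨1 - φc, ?_, ?_⟩
      · filter_upwards [φ.eventuallyEq_one] with y hy
        show (1 : ContMDiffMap I (modelWithCornersSelf ℝ ℝ) M ℝ (⊤ : ℕ∞)) y - φc y = 0
        simp [hφc, hy]
      · have key : (1 - φc) * f = f := by
          ext y
          show ((1 : ContMDiffMap I (modelWithCornersSelf ℝ ℝ) M ℝ (⊤ : ℕ∞)) y - φc y) * f y = f y
          by_cases h : φ y = 0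
          · simp [hφc, h]
          · have hy : y ∈ tsupport φ := subset_closure h
            have : f y = 0 := hφ hy
            simp [this]
        rw [← mul_smul, key]
    · rintro ⟨f, hf, hfm⟩
      exact ⟨f, m, hf, hfm.symm⟩
  · ext m
    simp only [Set.mem_setOf_eq]
    constructor
    · rintro ⟨f, hf, hfm⟩
      refine ⟨1 - f, ?_, ?_⟩
      · filter_upwards [hf] with y hy
        show (1 : ContMDiffMap I (modelWithCornersSelf ℝ ℝ) M ℝ (⊤ : ℕ∞)) y - f y = 1
        simp [hy]
      · rw [sub_smul, one_smul, hfm, sub_self]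
    · rintro ⟨f, hf, hfm⟩
      refine ⟨1 - f, ?_, ?_⟩
      · filter_upwards [hf] with y hy
        show (1 : ContMDiffMap I (modelWithCornersSelf ℝ ℝ) M ℝ (⊤ : ℕ∞)) y - f y = 0
        simp [hy]
      · rw [sub_smul, one_smul, hfm, sub_zero]
end

section
/- Let R be a commutative unital k-algebra (char k = 0), L a (k,R)-Lie algebra, and I ⊆ R an ideal such that L(I) ⊆ I (the anchor derivations preserve I) and for each r ∈ I there exists f ∈ I with fr = r. Then the localization U(R,L)/(I·U(R,L)) is isomorphic as a unital k-algebra to the universal enveloping algebra U(R/I', L/I'L) where R/I' = R_x and L_x = L/(I·L) are the corresponding quotients. In particular, for a Lie algebroid 𝔤 over M and x ∈ M there is a natural isomorphism of algebras U(𝔤)_x ≅ U(C^∞(M)_x, (Γ𝔤)_x). -/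
/-!
STATEMENT 6: For a `(k,R)`-Lie algebra `L` and an ideal `I ⊆ R` preserved by
the anchor derivations and such that each `r ∈ I` admits `f ∈ I` with
`f·r = r`, the quotient `U(R,L)/(I·U(R,L))` is isomorphic as a unital
`k`-algebra to `U(R/I, L/IL)`.  We state this by exhibiting a surjective
`k`-algebra homomorphism `φ : U(R,L) → U(R/I, L/IL)` compatible with the
structure maps whose kernel is exactly `I·U(R,L)`.

Both enveloping algebras are modeled abstractly by their universal
properties.
-/

theorem enveloping_localization_iso
    (k : Type) [Field k] [CharZero k]
    (R : Type) [CommRing R] [Algebra k R]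
    (L : Type) [LieRing L] [LieAlgebra k L] [Module R L] [IsScalarTower k R L]
    (ρ : L →ₗ[k] R →ₗ[k] R)
    (hρ_der : ∀ (X : L) (r s : R), ρ X (r * s) = ρ X r * s + r * ρ X s)
    -- U(R,L): a k-algebra A with its structure maps and universal property
    (A : Type) [Ring A] [Algebra k A]
    (ιR : R →ₐ[k] A) (ιL : L →ₗ[k] A)
    (hlie : ∀ X Y : L, ιL ⁅X, Y⁆ = ιL X * ιL Y - ιL Y * ιL X)
    (hsmul : ∀ (r : R) (X : L), ιR r * ιL X = ιL (r • X))
    (hcomm : ∀ (X : L) (r : R), ιL X * ιR r = ιR r * ιL X + ιR (ρ X r))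
    (hUA : ∀ (C : Type) [Ring C] [Algebra k C],
      ∀ (κR : R →ₐ[k] C) (κL : L →ₗ[k] C),
        (∀ X Y : L, κL ⁅X, Y⁆ = κL X * κL Y - κL Y * κL X) →
        (∀ (r : R) (X : L), κR r * κL X = κL (r • X)) →
        (∀ (X : L) (r : R), κL X * κR r = κR r * κL X + κR (ρ X r)) →
        ∃! φ : A →ₐ[k] C, (∀ r, φ (ιR r) = κR r) ∧ (∀ X, φ (ιL X) = κL X))
    -- the ideal I, preserved by the anchor and of germ type
    (I : Ideal R)
    (hI_anchor : ∀ (X : L), ∀ f ∈ I, ρ X f ∈ I)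
    (hI_unit : ∀ r ∈ I, ∃ f ∈ I, f * r = r)
    -- the induced anchor of the quotient Lie-Rinehart algebra (R/I, L/IL)
    (ρ' : (L ⧸ (I • (⊤ : Submodule R L))) →ₗ[k] (R ⧸ I) →ₗ[k] (R ⧸ I))
    (hρ' : ∀ (X : L) (r : R),
      ρ' (Submodule.Quotient.mk X) (Ideal.Quotient.mk I r) =
        Ideal.Quotient.mk I (ρ X r))
    -- U(R/I, L/IL): a k-algebra B with structure maps and universal property
    (B : Type) [Ring B] [Algebra k B]
    (ιR' : (R ⧸ I) →ₐ[k] B)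
    (ιL' : (L ⧸ (I • (⊤ : Submodule R L))) →ₗ[k] B)
    (hlie' : ∀ X Y : L,
      ιL' (Submodule.Quotient.mk ⁅X, Y⁆) =
        ιL' (Submodule.Quotient.mk X) * ιL' (Submodule.Quotient.mk Y) -
        ιL' (Submodule.Quotient.mk Y) * ιL' (Submodule.Quotient.mk X))
    (hsmul' : ∀ (r : R) (X : L),
      ιR' (Ideal.Quotient.mk I r) * ιL' (Submodule.Quotient.mk X) =
        ιL' (Submodule.Quotient.mk (r • X)))
    (hcomm' : ∀ (X : L) (r : R),
      ιL' (Submodule.Quotient.mk X) * ιR' (Ideal.Quotient.mk I r) =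
        ιR' (Ideal.Quotient.mk I r) * ιL' (Submodule.Quotient.mk X) +
          ιR' (Ideal.Quotient.mk I (ρ X r)))
    (hUB : ∀ (C : Type) [Ring C] [Algebra k C],
      ∀ (κR : (R ⧸ I) →ₐ[k] C)
        (κL : (L ⧸ (I • (⊤ : Submodule R L))) →ₗ[k] C),
        (∀ X Y : L, κL (Submodule.Quotient.mk ⁅X, Y⁆) =
          κL (Submodule.Quotient.mk X) * κL (Submodule.Quotient.mk Y) -
          κL (Submodule.Quotient.mk Y) * κL (Submodule.Quotient.mk X)) →
        (∀ (r : R) (X : L),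
          κR (Ideal.Quotient.mk I r) * κL (Submodule.Quotient.mk X) =
            κL (Submodule.Quotient.mk (r • X))) →
        (∀ (X : L) (r : R),
          κL (Submodule.Quotient.mk X) * κR (Ideal.Quotient.mk I r) =
            κR (Ideal.Quotient.mk I r) * κL (Submodule.Quotient.mk X) +
              κR (Ideal.Quotient.mk I (ρ X r))) →
        ∃! φ : B →ₐ[k] C,
          (∀ r, φ (ιR' r) = κR r) ∧ (∀ X, φ (ιL' X) = κL X)) :
    -- conclusion: U(R,L)/(I·U(R,L)) ≅ U(R/I, L/IL)
    ∃ φ : A →ₐ[k] B,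
      Function.Surjective φ ∧
      (∀ r : R, φ (ιR r) = ιR' (Ideal.Quotient.mk I r)) ∧
      (∀ X : L, φ (ιL X) = ιL' (Submodule.Quotient.mk X)) ∧
      ∀ a : A, φ a = 0 ↔
        a ∈ Submodule.span k {b : A | ∃ f ∈ I, ∃ u : A, b = ιR f * u} := by

  classical
  set S : Set A := {b : A | ∃ f ∈ I, ∃ u : A, b = ιR f * u} with hS
  set J : Submodule k A := Submodule.span k S with hJdef
  -- J is closed under right multiplication
  have hJ_right : ∀ a ∈ J, ∀ x : A, a * x ∈ J := by
    intro a ha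
    refine Submodule.span_induction (p := fun a _ => ∀ x : A, a * x ∈ J) ?_ ?_ ?_ ?_ ha
    · rintro b ⟨f, hf, u, rfl⟩ x
      exact Submodule.subset_span ⟨f, hf, u * x, mul_assoc _ _ _⟩
    · intro x; rw [zero_mul]; exact zero_mem _
    · intro x y _ _ hx hy z; rw [add_mul]; exact add_mem (hx z) (hy z)
    · intro cc x _ hx z; rw [smul_mul_assoc]; exact Submodule.smul_mem _ _ (hx z)
  -- uniqueness of endomorphisms of A fixing the structure maps
  have hgenUniq : ∀ (ψ : A →ₐ[k] A), (∀ r, ψ (ιR r) = ιR r) →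
      (∀ X, ψ (ιL X) = ιL X) → ψ = AlgHom.id k A := by
    obtain ⟨φ0, -, huniq⟩ := hUA A ιR ιL hlie hsmul hcomm
    intro ψ h1 h2
    rw [huniq ψ ⟨h1, h2⟩, huniq (AlgHom.id k A) ⟨fun _ => rfl, fun _ => rfl⟩]
  -- A is generated by the images of ιR and ιL
  have hgen : ∀ a : A, a ∈ Algebra.adjoin k (Set.range ⇑ιR ∪ Set.range ⇑ιL) := by
    set C := Algebra.adjoin k (Set.range ⇑ιR ∪ Set.range ⇑ιL) with hC
    have hmemR : ∀ r : R, ιR r ∈ C := fun r => Algebra.subset_adjoin (Or.inl ⟨r, rfl⟩)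
    have hmemL : ∀ X : L, ιL X ∈ C := fun X => Algebra.subset_adjoin (Or.inr ⟨X, rfl⟩)
    obtain ⟨ψ, ⟨hψR, hψL⟩, -⟩ := hUA C (ιR.codRestrict C hmemR)
      (ιL.codRestrict (Subalgebra.toSubmodule C) hmemL)
      (fun X Y => Subtype.ext (by exact hlie X Y))
      (fun r X => Subtype.ext (by exact hsmul r X))
      (fun X r => Subtype.ext (by exact hcomm X r))
    have hid : C.val.comp ψ = AlgHom.id k A := by
      refine hgenUniq _ (fun r => ?_) (fun X => ?_)
      · show C.val (ψ (ιR r)) = ιR r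
        rw [hψR r]; rfl
      · show C.val (ψ (ιL X)) = ιL X
        rw [hψL X]; rfl
    intro a
    have : C.val (ψ a) = a := AlgHom.congr_fun hid a
    rw [← this]
    exact (ψ a).2
  -- J is closed under left multiplication
  have hJ_left : ∀ (x : A), ∀ a ∈ J, x * a ∈ J := by
    intro x
    refine Algebra.adjoin_induction (p := fun x _ => ∀ a ∈ J, x * a ∈ J)
      ?_ ?_ ?_ ?_ (hgen x)
    · rintro y (⟨r, rfl⟩ | ⟨X, rfl⟩) a ha
      · refine Submodule.span_induction (p := fun a _ => ιR r * a ∈ J) ?_ ?_ ?_ ?_ ha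
        · rintro b ⟨f, hf, u, rfl⟩
          refine Submodule.subset_span ⟨r * f, Ideal.mul_mem_left I r hf, u, ?_⟩
          rw [map_mul, mul_assoc]
        · show ιR r * 0 ∈ J
          rw [mul_zero]; exact zero_mem _
        · intro p q _ _ hp hq; rw [mul_add]; exact add_mem hp hq
        · intro cc p _ hp; rw [mul_smul_comm]; exact Submodule.smul_mem _ _ hp
      · refine Submodule.span_induction (p := fun a _ => ιL X * a ∈ J) ?_ ?_ ?_ ?_ ha
        · rintro b ⟨f, hf, u, rfl⟩
          have : ιL X * (ιR f * u) = ιR f * (ιL X * u) + ιR (ρ X f) * u := by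
            rw [← mul_assoc, hcomm X f, add_mul, mul_assoc]
          rw [this]
          exact add_mem (Submodule.subset_span ⟨f, hf, ιL X * u, rfl⟩)
            (Submodule.subset_span ⟨ρ X f, hI_anchor X f hf, u, rfl⟩)
        · show ιL X * 0 ∈ J
          rw [mul_zero]; exact zero_mem _
        · intro p q _ _ hp hq; rw [mul_add]; exact add_mem hp hq
        · intro cc p _ hp; rw [mul_smul_comm]; exact Submodule.smul_mem _ _ hp
    · intro cc a ha
      rw [← Algebra.smul_def]
      exact Submodule.smul_mem _ _ ha
    · intro p q _ _ hp hq a ha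
      rw [add_mul]
      exact add_mem (hp a ha) (hq a ha)
    · intro p q _ _ hp hq a ha
      rw [mul_assoc]
      exact hp _ (hq a ha)
  -- the ring congruence defined by J
  let c : RingCon A :=
  { r := fun a b => a - b ∈ J
    iseqv := ⟨fun a => by show a - a ∈ J; simp, fun {a b} h => by
        show b - a ∈ J
        rw [← neg_sub]; exact neg_mem h, fun {a b d} h1 h2 => by
        show a - d ∈ J
        have := add_mem h1 h2
        rwa [sub_add_sub_cancel] at this⟩
    mul' := fun {w x y z} h1 h2 => by
      show w * y - x * z ∈ J
      have : w * y - x * z = (w - x) * y + x * (y - z) := by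
        rw [sub_mul, mul_sub]; abel
      rw [this]
      exact add_mem (hJ_right _ h1 y) (hJ_left x _ h2)
    add' := fun {w x y z} h1 h2 => by
      show w + y - (x + z) ∈ J
      have : w + y - (x + z) = (w - x) + (y - z) := by abel
      rw [this]
      exact add_mem h1 h2 }
  letI : Algebra k c.Quotient :=
  { toSMul := inferInstance
    algebraMap := c.mk'.comp (algebraMap k A)
    commutes' := fun r x => Quotient.inductionOn' x fun a => by
      show c.mk' (algebraMap k A r) * c.mk' a = c.mk' a * c.mk' (algebraMap k A r)
      rw [← map_mul, ← map_mul, Algebra.commutes]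
    smul_def' := fun r x => Quotient.inductionOn' x fun a => by
      show r • (c.mk' a) = c.mk' (algebraMap k A r) * c.mk' a
      rw [← map_mul, ← Algebra.smul_def]
      exact (RingCon.coe_smul c r a).symm }
  let piA : A →ₐ[k] c.Quotient := { c.mk' with commutes' := fun _ => rfl }
  have hpiA : ∀ a : A, piA a = c.mk' a := fun _ => rfl
  have hker : ∀ a : A, piA a = 0 ↔ a ∈ J := by
    intro a
    rw [show (0 : c.Quotient) = piA 0 by rw [map_zero]]
    show (a : c.Quotient) = ((0 : A) : c.Quotient) ↔ _
    rw [RingCon.eq]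
    show a - 0 ∈ J ↔ a ∈ J
    rw [sub_zero]
  -- structure maps into the quotient
  have hIzero : ∀ f ∈ I, piA (ιR f) = 0 := fun f hf =>
    (hker _).2 (Submodule.subset_span ⟨f, hf, 1, (mul_one _).symm⟩)
  let κR2 : (R ⧸ I) →ₐ[k] c.Quotient :=
    Ideal.Quotient.liftₐ I (piA.comp ιR) (fun f hf => hIzero f hf)
  have hκR2 : ∀ r : R, κR2 (Ideal.Quotient.mk I r) = piA (ιR r) := fun r => rfl
  have hle : (I • (⊤ : Submodule R L)).restrictScalars k ≤
      LinearMap.ker (piA.toLinearMap ∘ₗ ιL) := by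
    intro x hx
    simp only [Submodule.restrictScalars_mem] at hx
    refine Submodule.smul_induction_on hx ?_ ?_
    · intro f hf m _
      simp only [LinearMap.mem_ker, LinearMap.coe_comp, Function.comp_apply,
        AlgHom.toLinearMap_apply]
      rw [← hsmul f m]
      have : piA (ιR f * ιL m) = piA (ιR f) * piA (ιL m) := map_mul _ _ _
      rw [this, hIzero f hf, zero_mul]
    · intro p q hp hq
      simp only [LinearMap.mem_ker, map_add] at hp hq ⊢
      rw [hp, hq, add_zero]
  let κL2 : (L ⧸ (I • (⊤ : Submodule R L))) →ₗ[k] c.Quotient :=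
    (Submodule.liftQ ((I • (⊤ : Submodule R L)).restrictScalars k)
      (piA.toLinearMap ∘ₗ ιL) hle).comp
      (Submodule.Quotient.restrictScalarsEquiv k (I • (⊤ : Submodule R L))).symm.toLinearMap
  have hκL2 : ∀ X : L, κL2 (Submodule.Quotient.mk X) = piA (ιL X) := by
    intro X
    show (Submodule.liftQ _ _ hle)
      ((Submodule.Quotient.restrictScalarsEquiv k (I • (⊤ : Submodule R L))).symm
        (Submodule.Quotient.mk X)) = _
    rw [Submodule.Quotient.restrictScalarsEquiv_symm_mk]
    rfl
  -- the map ψ : B → A/J from the universal property of B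
  obtain ⟨ψ, ⟨hψR, hψL⟩, -⟩ := hUB c.Quotient κR2 κL2
    (fun X Y => by
      rw [hκL2, hκL2, hκL2, hlie X Y, map_sub, map_mul, map_mul])
    (fun r X => by
      rw [hκR2, hκL2, hκL2, ← map_mul, hsmul r X])
    (fun X r => by
      rw [hκR2, hκR2, hκL2, ← map_mul, ← map_mul, hcomm X r, map_add, map_mul])
  -- the map φ : A → B from the universal property of A
  let mkL : L →ₗ[k] (L ⧸ (I • (⊤ : Submodule R L))) :=
    (Submodule.Quotient.restrictScalarsEquiv k (I • (⊤ : Submodule R L))).toLinearMap ∘ₗ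
      ((I • (⊤ : Submodule R L)).restrictScalars k).mkQ
  have hmkL : ∀ X : L, mkL X = Submodule.Quotient.mk X := by
    intro X
    show (Submodule.Quotient.restrictScalarsEquiv k (I • (⊤ : Submodule R L)))
      (Submodule.Quotient.mk X) = _
    rw [Submodule.Quotient.restrictScalarsEquiv_mk]
  obtain ⟨φ, ⟨hφR, hφL⟩, -⟩ := hUA B (ιR'.comp (Ideal.Quotient.mkₐ k I)) (ιL'.comp mkL)
    (fun X Y => by simp only [LinearMap.coe_comp, Function.comp_apply, hmkL]; exact hlie' X Y)
    (fun r X => by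
      simp only [LinearMap.coe_comp, Function.comp_apply, AlgHom.coe_comp,
        Ideal.Quotient.mkₐ_eq_mk, hmkL]
      exact hsmul' r X)
    (fun X r => by
      simp only [LinearMap.coe_comp, Function.comp_apply, AlgHom.coe_comp,
        Ideal.Quotient.mkₐ_eq_mk, hmkL]
      exact hcomm' X r)
  have hφR' : ∀ r : R, φ (ιR r) = ιR' (Ideal.Quotient.mk I r) := fun r => hφR r
  have hφL' : ∀ X : L, φ (ιL X) = ιL' (Submodule.Quotient.mk X) := by
    intro X
    rw [hφL X]
    simp only [LinearMap.coe_comp, Function.comp_apply, hmkL]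
  refine ⟨φ, ?_, hφR', hφL', ?_⟩
  · -- surjectivity
    obtain ⟨idB, hidB, huniqB⟩ := hUB B ιR' ιL' hlie' hsmul' hcomm'
    have hmemR' : ∀ x : R ⧸ I, ιR' x ∈ φ.range := by
      intro x
      obtain ⟨r, rfl⟩ := Ideal.Quotient.mk_surjective x
      exact ⟨ιR r, (hφR' r)⟩
    have hmemL' : ∀ x : L ⧸ (I • (⊤ : Submodule R L)), ιL' x ∈ φ.range := by
      intro x
      obtain ⟨X, rfl⟩ := Submodule.Quotient.mk_surjective _ x
      exact ⟨ιL X, (hφL' X)⟩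
    obtain ⟨ψr, ⟨hψrR, hψrL⟩, -⟩ := hUB φ.range (ιR'.codRestrict φ.range hmemR')
      (ιL'.codRestrict (Subalgebra.toSubmodule φ.range) hmemL')
      (fun X Y => Subtype.ext (by exact hlie' X Y))
      (fun r X => Subtype.ext (by exact hsmul' r X))
      (fun X r => Subtype.ext (by exact hcomm' X r))
    have h1 : (φ.range.val : ↥φ.range →ₐ[k] B).comp ψr = idB := by
      refine huniqB _ ⟨fun r => ?_, fun X => ?_⟩
      · show φ.range.val (ψr (ιR' r)) = ιR' r
        rw [hψrR r]; rfl
      · show φ.range.val (ψr (ιL' X)) = ιL' X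
        rw [hψrL X]; rfl
    have h2 : AlgHom.id k B = idB := huniqB _ ⟨fun _ => rfl, fun _ => rfl⟩
    intro b
    have hvb : φ.range.val (ψr b) = b :=
      (AlgHom.congr_fun h1 b).trans (AlgHom.congr_fun h2 b).symm
    obtain ⟨a, ha⟩ : (ψr b : B) ∈ φ.range := (ψr b).2
    exact ⟨a, ha.trans hvb⟩
  · -- kernel characterization
    have hcomp : ψ.comp φ = piA := by
      obtain ⟨χ, -, huniqA2⟩ := hUA c.Quotient (piA.comp ιR) (piA.toLinearMap ∘ₗ ιL)
        (fun X Y => by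
          simp only [LinearMap.coe_comp, Function.comp_apply, AlgHom.toLinearMap_apply]
          rw [hlie X Y, map_sub, map_mul, map_mul])
        (fun r X => by
          simp only [LinearMap.coe_comp, Function.comp_apply, AlgHom.toLinearMap_apply,
            AlgHom.coe_comp]
          rw [← map_mul, hsmul r X])
        (fun X r => by
          simp only [LinearMap.coe_comp, Function.comp_apply, AlgHom.toLinearMap_apply,
            AlgHom.coe_comp]
          rw [← map_mul, hcomm X r, map_add, map_mul])
      have e1 : ψ.comp φ = χ := by
        refine huniqA2 _ ⟨fun r => ?_, fun X => ?_⟩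
        · show ψ (φ (ιR r)) = piA (ιR r)
          rw [hφR' r, hψR, hκR2]
        · show ψ (φ (ιL X)) = piA (ιL X)
          rw [hφL' X, hψL, hκL2]
      have e2 : piA = χ := huniqA2 _ ⟨fun _ => rfl, fun _ => rfl⟩
      rw [e1, e2]
    intro a
    constructor
    · intro ha
      have : piA a = 0 := by
        rw [← hcomp]
        show ψ (φ a) = 0
        rw [ha, map_zero]
      exact (hker a).1 this
    · intro ha
      refine Submodule.span_induction (p := fun a _ => φ a = 0) ?_ ?_ ?_ ?_ ha
      · rintro b ⟨f, hf, u, rfl⟩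
        rw [map_mul, hφR' f, Ideal.Quotient.eq_zero_iff_mem.2 hf, map_zero, zero_mul]
      · exact map_zero φ
      · intro p q _ _ hp hq; rw [map_add, hp, hq, add_zero]
      · intro cc p _ hp; rw [map_smul, hp, smul_zero]
end

section
/- Let E be an étale Lie groupoid over M. For local bisections E₁, E₂ of E and functions f₁ ∈ C^∞_c(t(E₁)), f₂ ∈ C^∞_c(t(E₂)), the convolution product in C^∞_c(E) satisfies ⟨f₂,E₂⟩·⟨f₁,E₁⟩ = ⟨f₂·(f₁ ∘ τ_{E₂}^{-1}), E₂·E₁⟩, where τ_{E₂} : s(E₂) → t(E₂) is the diffeomorphism induced by E₂ and E₂·E₁ = {g₂g₁ : g₁ ∈ E₁, g₂ ∈ E₂, s(g₂) = t(g₁)} is the product bisection. -/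
/-!
STATEMENT 11: For an étale Lie groupoid `E` over `M`, local bisections
`E₁, E₂` and functions `f₁ ∈ C^∞_c(t(E₁))`, `f₂ ∈ C^∞_c(t(E₂))`, the
convolution product satisfies
`⟨f₂,E₂⟩·⟨f₁,E₁⟩ = ⟨f₂·(f₁ ∘ τ_{E₂}⁻¹), E₂·E₁⟩`.

Setup as in STATEMENT 10; bisections are bundled with a section `α` of the
source map and an inverse `τinv` of the induced map `τ = t ∘ α`.
-/

open Filter Topology

attribute [local instance] Classical.propDecidable

structure GroupoidStr (G M : Type) where
  s : G → M
  t : G → M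
  unit : M → G
  inv : G → G
  mul : G → G → G
  s_unit : ∀ x, s (unit x) = x
  t_unit : ∀ x, t (unit x) = x
  s_inv : ∀ g, s (inv g) = t g
  t_inv : ∀ g, t (inv g) = s g
  s_mul : ∀ g' g, s g' = t g → s (mul g' g) = s g
  t_mul : ∀ g' g, s g' = t g → t (mul g' g) = t g'
  mul_assoc : ∀ g'' g' g, s g'' = t g' → s g' = t g →
    mul (mul g'' g') g = mul g'' (mul g' g)
  unit_mul : ∀ g, mul (unit (t g)) g = g
  mul_unit : ∀ g, mul g (unit (s g)) = g
  inv_mul : ∀ g, mul (inv g) g = unit (s g)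
  mul_inv : ∀ g, mul g (inv g) = unit (t g)

variable {G M : Type} [TopologicalSpace G] [TopologicalSpace M]

noncomputable def germAct (𝒢 : GroupoidStr G M) (ht : IsLocalHomeomorph 𝒢.t)
    (hs : Continuous 𝒢.s) (e : G) (F : Filter.Germ (𝓝 (𝒢.s e)) ℝ) :
    Filter.Germ (𝓝 (𝒢.t e)) ℝ :=
  F.compTendsto (fun y => 𝒢.s ((ht e).choose.symm y)) (by
    obtain ⟨hmem, heq⟩ := (ht e).choose_spec
    have h0 : 𝒢.t e = (ht e).choose e := congrFun heq e
    have hte : 𝒢.t e ∈ (ht e).choose.target := by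
      rw [h0]; exact (ht e).choose.map_source hmem
    have h2 : (ht e).choose.symm (𝒢.t e) = e := by
      rw [h0]; exact (ht e).choose.left_inv hmem
    have h3 : ContinuousAt (fun y => 𝒢.s ((ht e).choose.symm y)) (𝒢.t e) :=
      (hs.continuousAt).comp ((ht e).choose.continuousAt_symm hte)
    have h4 := h3.tendsto
    rw [h2] at h4
    exact h4)

def GermSection (𝒢 : GroupoidStr G M) : Type :=
  (e : G) → Filter.Germ (𝓝 (𝒢.t e)) ℝ

noncomputable def conv (𝒢 : GroupoidStr G M) (ht : IsLocalHomeomorph 𝒢.t)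
    (hs : Continuous 𝒢.s) (a b : GermSection 𝒢) : GermSection 𝒢 :=
  fun e'' =>
    ∑ᶠ p : {p : G × G // 𝒢.s p.1 = 𝒢.t p.2 ∧ 𝒢.mul p.1 p.2 = e''},
      cast (congrArg (fun z => Filter.Germ (𝓝 z) ℝ)
          (((congrArg 𝒢.t p.2.2).symm.trans
            (𝒢.t_mul p.1.1 p.1.2 p.2.1)).symm))
        ((a p.1.1) *
          germAct 𝒢 ht hs p.1.1
            (cast ((congrArg (fun z => Filter.Germ (𝓝 z) ℝ) p.2.1).symm)
              (b p.1.2)))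

/-- A local bisection of a (topological étale) groupoid. -/
structure Bisection (𝒢 : GroupoidStr G M) where
  src : Set M
  isOpen_src : IsOpen src
  α : M → G
  hα : ∀ x ∈ src, 𝒢.s (α x) = x
  contOn_α : ContinuousOn α src
  contOn_τ : ContinuousOn (fun x => 𝒢.t (α x)) src
  isOpen_tgt : IsOpen ((fun x => 𝒢.t (α x)) '' src)
  τ_openMap : ∀ U ⊆ src, IsOpen U → IsOpen ((fun x => 𝒢.t (α x)) '' U)
  τinv : M → M
  τinv_left : ∀ x ∈ src, τinv (𝒢.t (α x)) = x
  contOn_τinv : ContinuousOn τinv ((fun x => 𝒢.t (α x)) '' src)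

def Bisection.tgt {𝒢 : GroupoidStr G M} (E : Bisection 𝒢) : Set M :=
  (fun x => 𝒢.t (E.α x)) '' E.src

def Bisection.carrier {𝒢 : GroupoidStr G M} (E : Bisection 𝒢) : Set G :=
  E.α '' E.src

/-- The element `⟨f, E⟩` of the convolution algebra: the germ of `f` at
`t e` for `e ∈ E`, and `0` outside `E`. -/
noncomputable def elem (𝒢 : GroupoidStr G M) (f : M → ℝ) (S : Set G) :
    GermSection 𝒢 :=
  fun e => if e ∈ S then (f : Filter.Germ (𝓝 (𝒢.t e)) ℝ) else 0

/-- The product of (the underlying sets of) two local bisections. -/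
def mulSet (𝒢 : GroupoidStr G M) (S' S : Set G) : Set G :=
  {h | ∃ g' ∈ S', ∃ g ∈ S, 𝒢.s g' = 𝒢.t g ∧ h = 𝒢.mul g' g}

section Aux

open Filter Topology

variable {G M : Type} [TopologicalSpace G] [TopologicalSpace M]

lemma cast_germ {x y : M} (hxy : x = y)
    (h : Filter.Germ (𝓝 x) ℝ = Filter.Germ (𝓝 y) ℝ)
    (F : Filter.Germ (𝓝 x) ℝ) (Gm : Filter.Germ (𝓝 y) ℝ)
    (hFG : HEq F Gm) : cast h F = Gm := by
  subst hxy
  exact eq_of_heq ((cast_heq h F).trans hFG)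

lemma heq_germ_coe {x y : M} (hxy : x = y) (f : M → ℝ) :
    HEq ((f : Filter.Germ (𝓝 x) ℝ)) ((f : Filter.Germ (𝓝 y) ℝ)) := by
  subst hxy; rfl

lemma heq_germ_zero {x y : M} (hxy : x = y) :
    HEq ((0 : Filter.Germ (𝓝 x) ℝ)) ((0 : Filter.Germ (𝓝 y) ℝ)) := by
  subst hxy; rfl

/-- germAct sends `0` to `0`. -/
lemma germAct_zero (𝒢 : GroupoidStr G M) (ht : IsLocalHomeomorph 𝒢.t)
    (hs : Continuous 𝒢.s) (e : G) :
    germAct 𝒢 ht hs e (0 : Filter.Germ (𝓝 (𝒢.s e)) ℝ) = 0 := by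
  unfold germAct
  rfl

/-- cancellation -/
lemma mul_left_cancel' (𝒢 : GroupoidStr G M) {a b c : G}
    (hb : 𝒢.s a = 𝒢.t b) (hc : 𝒢.s a = 𝒢.t c)
    (hm : 𝒢.mul a b = 𝒢.mul a c) : b = c := by
  have h1 : 𝒢.mul (𝒢.inv a) (𝒢.mul a b) = 𝒢.mul (𝒢.inv a) (𝒢.mul a c) := by
    rw [hm]
  rw [← 𝒢.mul_assoc _ _ _ (𝒢.s_inv a) hb, ← 𝒢.mul_assoc _ _ _ (𝒢.s_inv a) hc,
    𝒢.inv_mul a] at h1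
  have hb' : 𝒢.mul (𝒢.unit (𝒢.s a)) b = b := by rw [hb]; exact 𝒢.unit_mul b
  have hc' : 𝒢.mul (𝒢.unit (𝒢.s a)) c = c := by rw [hc]; exact 𝒢.unit_mul c
  rw [hb', hc'] at h1
  exact h1

/-- t is injective on the carrier of a bisection. -/
lemma t_injOn_carrier (𝒢 : GroupoidStr G M) (E : Bisection 𝒢) {g g' : G}
    (hg : g ∈ E.carrier) (hg' : g' ∈ E.carrier) (h : 𝒢.t g = 𝒢.t g') :
    g = g' := by
  obtain ⟨x, hx, rfl⟩ := hg
  obtain ⟨x', hx', rfl⟩ := hg'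
  have : x = x' := by
    have h1 := E.τinv_left x hx
    have h2 := E.τinv_left x' hx'
    rw [← h1, ← h2, h]
  rw [this]

lemma pair_unique (𝒢 : GroupoidStr G M) (E₁ E₂ : Bisection 𝒢)
    {g₂ g₁ q₂ q₁ : G}
    (hg₂ : g₂ ∈ E₂.carrier) (hq₂ : q₂ ∈ E₂.carrier)
    (h1 : 𝒢.s g₂ = 𝒢.t g₁) (h2 : 𝒢.s q₂ = 𝒢.t q₁)
    (hm : 𝒢.mul g₂ g₁ = 𝒢.mul q₂ q₁) : g₂ = q₂ ∧ g₁ = q₁ := by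
  have ht2 : 𝒢.t g₂ = 𝒢.t q₂ := by
    have e1 := 𝒢.t_mul g₂ g₁ h1
    have e2 := 𝒢.t_mul q₂ q₁ h2
    rw [← e1, ← e2, hm]
  have hgq : g₂ = q₂ := t_injOn_carrier 𝒢 E₂ hg₂ hq₂ ht2
  subst hgq
  exact ⟨rfl, mul_left_cancel' 𝒢 h1 h2 hm⟩

/-- Key geometric lemma. -/
lemma key_germ (𝒢 : GroupoidStr G M) (ht : IsLocalHomeomorph 𝒢.t)
    (hsl : IsLocalHomeomorph 𝒢.s) (hs : Continuous 𝒢.s)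
    (E₂ : Bisection 𝒢) {g₂ : G} (hg₂ : g₂ ∈ E₂.carrier) :
    ∀ᶠ y in 𝓝 (𝒢.t g₂), 𝒢.s ((ht g₂).choose.symm y) = E₂.τinv y := by
  obtain ⟨x₀, hx₀, hαx₀⟩ := hg₂
  obtain ⟨hψmem, hψeq⟩ := (hsl g₂).choose_spec
  set ψ := (hsl g₂).choose with hψ
  obtain ⟨hφmem, hφeq⟩ := (ht g₂).choose_spec
  set φ := (ht g₂).choose with hφ
  have hsx : 𝒢.s g₂ = x₀ := by rw [← hαx₀]; exact E₂.hα x₀ hx₀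
  have hψg : ψ g₂ = x₀ := by rw [← congrFun hψeq g₂]; exact hsx
  have hφg : φ g₂ = 𝒢.t g₂ := (congrFun hφeq g₂).symm
  -- Step 1: near x₀, α agrees with ψ.symm
  have hαcont : ContinuousAt E₂.α x₀ :=
    E₂.contOn_α.continuousAt (E₂.isOpen_src.mem_nhds hx₀)
  have hα_tendsto : Filter.Tendsto E₂.α (𝓝 x₀) (𝓝 g₂) := by
    have := hαcont.tendsto
    rwa [hαx₀] at this
  have step1 : ∀ᶠ x' in 𝓝 x₀, x' ∈ E₂.src ∧ E₂.α x' = ψ.symm x' := by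
    have hev1 : ∀ᶠ x' in 𝓝 x₀, E₂.α x' ∈ ψ.source :=
      hα_tendsto (ψ.open_source.mem_nhds hψmem)
    have hev2 : ∀ᶠ x' in 𝓝 x₀, x' ∈ E₂.src :=
      E₂.isOpen_src.mem_nhds hx₀
    filter_upwards [hev1, hev2] with x' h1 h2
    refine ⟨h2, ?_⟩
    have hψα : ψ (E₂.α x') = x' := by
      rw [← congrFun hψeq (E₂.α x')]
      exact E₂.hα x' h2
    have h3 := ψ.left_inv h1
    rw [hψα] at h3
    exact h3.symm
  -- Step 2: σ := s ∘ φ.symm is continuous at t g₂ with value x₀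
  have htg : 𝒢.t g₂ ∈ φ.target := by rw [← hφg]; exact φ.map_source hφmem
  have hφsymm : φ.symm (𝒢.t g₂) = g₂ := by rw [← hφg]; exact φ.left_inv hφmem
  have hσcont : ContinuousAt (fun y => 𝒢.s (φ.symm y)) (𝒢.t g₂) :=
    hs.continuousAt.comp (φ.continuousAt_symm htg)
  have hσval : 𝒢.s (φ.symm (𝒢.t g₂)) = x₀ := by rw [hφsymm]; exact hsx
  have hσ_tendsto : Filter.Tendsto (fun y => 𝒢.s (φ.symm y)) (𝓝 (𝒢.t g₂)) (𝓝 x₀) := by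
    have := hσcont.tendsto
    rwa [hσval] at this
  have hφsymm_tendsto : Filter.Tendsto φ.symm (𝓝 (𝒢.t g₂)) (𝓝 g₂) := by
    have := (φ.continuousAt_symm htg).tendsto
    rwa [hφsymm] at this
  have hev3 : ∀ᶠ y in 𝓝 (𝒢.t g₂), φ.symm y ∈ ψ.source :=
    hφsymm_tendsto (ψ.open_source.mem_nhds hψmem)
  have hev4 : ∀ᶠ y in 𝓝 (𝒢.t g₂), y ∈ φ.target :=
    φ.open_target.mem_nhds htg
  filter_upwards [hσ_tendsto step1, hev3, hev4] with y hy1 hy2 hy3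
  obtain ⟨hsrc, hαeq⟩ := hy1
  have hx'ψ : 𝒢.s (φ.symm y) = ψ (φ.symm y) := congrFun hψeq (φ.symm y)
  have hαeq' : E₂.α (𝒢.s (φ.symm y)) = ψ.symm (𝒢.s (φ.symm y)) := hαeq
  have hsrc' : 𝒢.s (φ.symm y) ∈ E₂.src := hsrc
  have hα' : E₂.α (𝒢.s (φ.symm y)) = φ.symm y := by
    rw [hαeq', hx'ψ]
    exact ψ.left_inv hy2
  have htα : 𝒢.t (E₂.α (𝒢.s (φ.symm y))) = y := by
    rw [hα', congrFun hφeq (φ.symm y)]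
    exact φ.right_inv hy3
  have h5 := E₂.τinv_left (𝒢.s (φ.symm y)) hsrc'
  rw [htα] at h5
  exact h5.symm

end Aux

section Main

open Filter Topology

variable {G M : Type} [TopologicalSpace G] [TopologicalSpace M]

lemma term_eval (𝒢 : GroupoidStr G M) (ht : IsLocalHomeomorph 𝒢.t)
    (hsl : IsLocalHomeomorph 𝒢.s) (hs : Continuous 𝒢.s)
    (E₁ E₂ : Bisection 𝒢) (f₁ f₂ : M → ℝ) {e'' : G}
    (p : {p : G × G // 𝒢.s p.1 = 𝒢.t p.2 ∧ 𝒢.mul p.1 p.2 = e''}) :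
    cast (congrArg (fun z => Filter.Germ (𝓝 z) ℝ)
        (((congrArg 𝒢.t p.2.2).symm.trans
          (𝒢.t_mul p.1.1 p.1.2 p.2.1)).symm))
      ((elem 𝒢 f₂ E₂.carrier p.1.1) *
        germAct 𝒢 ht hs p.1.1
          (cast ((congrArg (fun z => Filter.Germ (𝓝 z) ℝ) p.2.1).symm)
            (elem 𝒢 f₁ E₁.carrier p.1.2))) =
    (if p.1.1 ∈ E₂.carrier ∧ p.1.2 ∈ E₁.carrier then
      ((fun y => f₂ y * f₁ (E₂.τinv y)) : Filter.Germ (𝓝 (𝒢.t e'')) ℝ)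
    else 0) := by
  obtain ⟨⟨g₂, g₁⟩, hst, hm⟩ := p
  dsimp only at *
  have hxy : 𝒢.t g₂ = 𝒢.t e'' :=
    (𝒢.t_mul g₂ g₁ hst).symm.trans (congrArg 𝒢.t hm)
  by_cases h2 : g₂ ∈ E₂.carrier
  · by_cases h1 : g₁ ∈ E₁.carrier
    · rw [if_pos ⟨h2, h1⟩]
      have he2 : elem 𝒢 f₂ E₂.carrier g₂ = (f₂ : Filter.Germ (𝓝 (𝒢.t g₂)) ℝ) := by
        simp only [elem, if_pos h2]
      have he1 : elem 𝒢 f₁ E₁.carrier g₁ = (f₁ : Filter.Germ (𝓝 (𝒢.t g₁)) ℝ) := by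
        simp only [elem, if_pos h1]
      rw [he2, he1]
      rw [show (cast ((congrArg (fun z => Filter.Germ (𝓝 z) ℝ) hst).symm)
            ((f₁ : Filter.Germ (𝓝 (𝒢.t g₁)) ℝ)))
          = (f₁ : Filter.Germ (𝓝 (𝒢.s g₂)) ℝ) from
        cast_germ hst.symm _ _ _ (heq_germ_coe hst.symm f₁)]
      apply cast_germ hxy
      refine HEq.trans (heq_of_eq ?_) (heq_germ_coe hxy _)
      unfold germAct
      rw [Filter.Germ.coe_compTendsto]
      rw [show ((fun y => f₂ y * f₁ (E₂.τinv y)) : Filter.Germ (𝓝 (𝒢.t g₂)) ℝ)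
          = ((f₂ : Filter.Germ (𝓝 (𝒢.t g₂)) ℝ) *
            ((fun y => f₁ (E₂.τinv y)) : Filter.Germ (𝓝 (𝒢.t g₂)) ℝ)) from rfl]
      congr 1
      apply Filter.Germ.coe_eq.mpr
      filter_upwards [key_germ 𝒢 ht hsl hs E₂ h2] with y hy
      simp only [Function.comp_apply, hy]
    · rw [if_neg (fun h => h1 h.2)]
      have he1 : elem 𝒢 f₁ E₁.carrier g₁ = 0 := by
        simp only [elem, if_neg h1]
      rw [he1]
      rw [show (cast ((congrArg (fun z => Filter.Germ (𝓝 z) ℝ) hst).symm)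
            ((0 : Filter.Germ (𝓝 (𝒢.t g₁)) ℝ)))
          = (0 : Filter.Germ (𝓝 (𝒢.s g₂)) ℝ) from
        cast_germ hst.symm _ _ _ (heq_germ_zero hst.symm)]
      rw [germAct_zero, mul_zero]
      exact cast_germ hxy _ _ _ (heq_germ_zero hxy)
  · rw [if_neg (fun h => h2 h.1)]
    have he2 : elem 𝒢 f₂ E₂.carrier g₂ = 0 := by
      simp only [elem, if_neg h2]
    rw [he2, zero_mul]
    exact cast_germ hxy _ _ _ (heq_germ_zero hxy)

end Main

theorem convolution_of_bisection_elements
    [T2Space G] [T2Space M]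
    (𝒢 : GroupoidStr G M)
    (ht : IsLocalHomeomorph 𝒢.t) (hsl : IsLocalHomeomorph 𝒢.s)
    (hs : Continuous 𝒢.s)
    (E₁ E₂ : Bisection 𝒢) (f₁ f₂ : M → ℝ)
    (hf₁ : Continuous f₁) (hf₂ : Continuous f₂)
    (hc₁ : HasCompactSupport f₁) (hc₂ : HasCompactSupport f₂)
    (hsupp₁ : tsupport f₁ ⊆ E₁.tgt) (hsupp₂ : tsupport f₂ ⊆ E₂.tgt) :
    conv 𝒢 ht hs (elem 𝒢 f₂ E₂.carrier) (elem 𝒢 f₁ E₁.carrier) =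
      elem 𝒢 (fun y => f₂ y * f₁ (E₂.τinv y))
        (mulSet 𝒢 E₂.carrier E₁.carrier) := by
  funext e''
  have hmain : conv 𝒢 ht hs (elem 𝒢 f₂ E₂.carrier) (elem 𝒢 f₁ E₁.carrier) e''
      = ∑ᶠ p : {p : G × G // 𝒢.s p.1 = 𝒢.t p.2 ∧ 𝒢.mul p.1 p.2 = e''},
          (if p.1.1 ∈ E₂.carrier ∧ p.1.2 ∈ E₁.carrier then
            ((fun y => f₂ y * f₁ (E₂.τinv y)) : Filter.Germ (𝓝 (𝒢.t e'')) ℝ)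
          else 0) := by
    simp only [conv]
    exact finsum_congr (fun p => term_eval 𝒢 ht hsl hs E₁ E₂ f₁ f₂ p)
  rw [hmain]
  by_cases he : e'' ∈ mulSet 𝒢 E₂.carrier E₁.carrier
  · obtain ⟨g₂, hg₂, g₁, hg₁, hst, hmul⟩ := he
    have he' : e'' ∈ mulSet 𝒢 E₂.carrier E₁.carrier :=
      ⟨g₂, hg₂, g₁, hg₁, hst, hmul⟩
    rw [finsum_eq_single _
      (⟨(g₂, g₁), hst, hmul.symm⟩ :
        {p : G × G // 𝒢.s p.1 = 𝒢.t p.2 ∧ 𝒢.mul p.1 p.2 = e''})]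
    · rw [if_pos ⟨hg₂, hg₁⟩]
      simp only [elem, if_pos he']
    · rintro ⟨⟨q₂, q₁⟩, hqst, hqm⟩ hne
      by_cases hq : q₂ ∈ E₂.carrier ∧ q₁ ∈ E₁.carrier
      · exfalso
        apply hne
        have := pair_unique 𝒢 E₁ E₂ hq.1 hg₂ hqst hst (hqm.trans hmul)
        exact Subtype.ext (Prod.ext this.1 this.2)
      · rw [if_neg hq]
  · rw [finsum_eq_zero_of_forall_eq_zero]
    · simp only [elem, if_neg he]
    · rintro ⟨⟨q₂, q₁⟩, hqst, hqm⟩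
      rw [if_neg]
      intro hq
      exact he ⟨q₂, hq.1, q₁, hq.2, hqst, hqm.symm⟩
end
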